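/- Let ρ < 0 be a real number. The total number of ρ-avoided words w in x with |w| > 2 (of any length, occurring or absent) is at most σ·n + 2n. -/

import Mathlib

/-- The observed frequency `f(w)`: the number of starting positions at which
the word `w` occurs in the word `x` (occurrences may overlap). -/
def occ {α : Type*} [DecidableEq α] (x w : List α) : ℕ :=
  ((Finset.range (x.length + 1)).filter (fun i => (x.drop i).take w.length = w)).card

/-- The expected frequency `E(w)` of `w` in `x`:
`E(w) = f(w_p)·f(w_s)/f(w_i)` if `f(w_i) > 0`, and `E(w) = 0` otherwise,
where `w_p = w.dropLast` is the longest proper prefix of `w`,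
`w_s = w.tail` is the longest proper suffix of `w`, and
`w_i = w.tail.dropLast` is the infix of `w` obtained by deleting its
first and last letters. -/
noncomputable def expFreq {α : Type*} [DecidableEq α] (x w : List α) : ℝ :=
  if 0 < occ x w.tail.dropLast then
    ((occ x w.dropLast : ℝ) * (occ x w.tail : ℝ)) / (occ x w.tail.dropLast : ℝ)
  else 0

/-- The standard deviation `std(w) = (f(w) − E(w)) / max(√E(w), 1)`. -/
noncomputable def stdDev {α : Type*} [DecidableEq α] (x w : List α) : ℝ :=
  ((occ x w : ℝ) - expFreq x w) / max (Real.sqrt (expFreq x w)) 1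

/-- `w` is a minimal absent word of `x`: `w` is absent from `x`
(`f(w) = 0`) and every proper factor of `w` occurs in `x`. -/
def IsMAW {α : Type*} [DecidableEq α] (x w : List α) : Prop :=
  occ x w = 0 ∧ ∀ v : List α, v <:+: w → v ≠ w → 0 < occ x v


/-!
Write a word of length at least three as `w = a v b`. If `std(w) < 0` then `f(w) < E(w)`, so
`f(v) > 0` and `f(avb)·f(v) < f(av)·f(vb)`; combined with the inclusion–exclusion inequality
`f(av) + f(vb) ≤ f(v) + f(avb)` this forces `0 < f(av) < f(v)` and `0 < f(vb) < f(v)`.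
Hence, writing `ℓ(v)`, `r(v)` for the numbers of such letters `a`, `b` and `L(v)`, `R(v)` for the
numbers of all occurring extensions `av`, `vb`, the number of avoided words is at most
`∑ ℓ(v) r(v) ≤ σ ∑ (R(v) - 1) + ∑ (L(v) - 1) + #{v | ℓ(v) > 0, r(v) > 0}`.
Extending a factor by one letter is injective into the factors, and a factor without right (left)
extension is a suffix (prefix) of `x`, so both sums are at most `n`. The factors `v` with
`ℓ(v), r(v) > 0` occur at least twice and are determined by their sets of starting positions;
these sets form a laminar family of subsets of `{0, …, n - 1}`, which has fewer than `n` members.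
-/

section Occurrences

variable {α : Type*} [DecidableEq α] {x u v w : List α} {a b : α} {i : ℕ}

def occurrences (x w : List α) : Finset ℕ :=
  (Finset.range (x.length + 1)).filter (fun i => (x.drop i).take w.length = w)

theorem card_occurrences (x w : List α) : (occurrences x w).card = occ x w := rfl

theorem mem_occurrences : i ∈ occurrences x w ↔ i ≤ x.length ∧ w <+: x.drop i := by
  simp only [occurrences, Finset.mem_filter, Finset.mem_range, Nat.lt_succ_iff,
    List.prefix_iff_eq_take, eq_comm]

theorem occ_pos_iff : 0 < occ x w ↔ w <:+: x := by
  rw [← card_occurrences, Finset.card_pos]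
  constructor
  · rintro ⟨i, hi⟩
    exact (mem_occurrences.mp hi).2.isInfix.trans (List.drop_suffix i x).isInfix
  · rintro ⟨p, s, rfl⟩
    exact ⟨p.length, mem_occurrences.mpr ⟨by simp, by simp⟩⟩

theorem occurrences_subset_of_prefix (h : u <+: w) : occurrences x w ⊆ occurrences x u :=
  fun _ hi => mem_occurrences.mpr ⟨(mem_occurrences.mp hi).1, h.trans (mem_occurrences.mp hi).2⟩

theorem occ_le_of_prefix (h : u <+: w) : occ x w ≤ occ x u :=
  Finset.card_le_card (occurrences_subset_of_prefix h)

theorem drop_eq_cons_of_mem_occurrences (h : i ∈ occurrences x (a :: w)) :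
    x.drop i = a :: x.drop (i + 1) := by
  have hpre := (mem_occurrences.mp h).2
  rw [← List.tail_drop]
  cases hx : x.drop i with
  | nil => simp [hx] at hpre
  | cons c t => rw [hx] at hpre; rw [(List.cons_prefix_cons.mp hpre).1, List.tail_cons]

theorem succ_mem_occurrences_of_cons (h : i ∈ occurrences x (a :: w)) :
    i + 1 ∈ occurrences x w := by
  have hdrop := drop_eq_cons_of_mem_occurrences h
  have hlen := congrArg List.length hdrop
  have hpre := (mem_occurrences.mp h).2
  rw [hdrop, List.prefix_cons_inj] at hpre
  simp only [List.length_drop, List.length_cons] at hlen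
  exact mem_occurrences.mpr ⟨by omega, hpre⟩

theorem occ_cons_le : occ x (a :: w) ≤ occ x w :=
  Finset.card_le_card_of_injOn (· + 1) (fun _ hi => succ_mem_occurrences_of_cons hi)
    (fun _ _ _ _ h => Nat.succ_injective h)

theorem prefix_of_mem_occurrences (hv : i ∈ occurrences x v) (hw : i ∈ occurrences x w)
    (hlen : v.length ≤ w.length) : v <+: w :=
  List.prefix_of_prefix_length_le (mem_occurrences.mp hv).2 (mem_occurrences.mp hw).2 hlen

theorem disjoint_occurrences_concat (hab : a ≠ b) :
    Disjoint (occurrences x (v ++ [a])) (occurrences x (v ++ [b])) := by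
  refine Finset.disjoint_left.mpr fun i ha hb => hab ?_
  simpa using (prefix_of_mem_occurrences ha hb (by simp)).eq_of_length (by simp)

theorem occ_concat_add_occ_concat_le (hab : a ≠ b) :
    occ x (v ++ [a]) + occ x (v ++ [b]) ≤ occ x v := by
  rw [← card_occurrences, ← card_occurrences, ← Finset.card_union_of_disjoint
    (disjoint_occurrences_concat hab)]
  exact Finset.card_le_card (Finset.union_subset
    (occurrences_subset_of_prefix (List.prefix_append _ _))
    (occurrences_subset_of_prefix (List.prefix_append _ _)))

theorem occ_cons_add_occ_concat_le :
    occ x (a :: v) + occ x (v ++ [b]) ≤ occ x v + occ x (a :: (v ++ [b])) := by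
  have hshift : ∀ w, ((occurrences x (a :: w)).image (· + 1)).card = occ x (a :: w) :=
    fun w => Finset.card_image_of_injective _ Nat.succ_injective
  set shifted := (occurrences x (a :: v)).image (· + 1)
  have hunion : shifted ∪ occurrences x (v ++ [b]) ⊆ occurrences x v := by
    refine Finset.union_subset ?_ (occurrences_subset_of_prefix (List.prefix_append _ _))
    intro j hj
    obtain ⟨i, hi, rfl⟩ := Finset.mem_image.mp hj
    exact succ_mem_occurrences_of_cons hi
  have hinter : shifted ∩ occurrences x (v ++ [b]) ⊆
      (occurrences x (a :: (v ++ [b]))).image (· + 1) := by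
    intro j hj
    obtain ⟨hj, hjb⟩ := Finset.mem_inter.mp hj
    obtain ⟨i, hi, rfl⟩ := Finset.mem_image.mp hj
    refine Finset.mem_image.mpr ⟨i, mem_occurrences.mpr ⟨(mem_occurrences.mp hi).1, ?_⟩, rfl⟩
    rw [drop_eq_cons_of_mem_occurrences hi, List.prefix_cons_inj]
    exact (mem_occurrences.mp hjb).2
  calc occ x (a :: v) + occ x (v ++ [b])
      = (shifted ∪ occurrences x (v ++ [b])).card + (shifted ∩ occurrences x (v ++ [b])).card := by
        rw [Finset.card_union_add_card_inter, hshift, card_occurrences]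
    _ ≤ occ x v + occ x (a :: (v ++ [b])) :=
        add_le_add (Finset.card_le_card hunion) ((Finset.card_le_card hinter).trans_eq (hshift _))

end Occurrences

section Laminar

variable {β : Type*} {F G : Finset (Finset β)} {U E E₀ : Finset β}

def IsLaminar (F : Finset (Finset β)) : Prop :=
  ∀ E ∈ F, ∀ E' ∈ F, E ⊆ E' ∨ E' ⊆ E ∨ Disjoint E E'

theorem IsLaminar.mono (hF : IsLaminar F) (hG : G ⊆ F) : IsLaminar G :=
  fun E hE E' hE' => hF E (hG hE) E' (hG hE')

theorem IsLaminar.image_erase [DecidableEq β] (hF : IsLaminar F) (e : β) :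
    IsLaminar (F.image (·.erase e)) := by
  intro _ hA _ hB
  obtain ⟨E, hE, rfl⟩ := Finset.mem_image.mp hA
  obtain ⟨E', hE', rfl⟩ := Finset.mem_image.mp hB
  rcases hF E hE E' hE' with h | h | h
  · exact .inl (Finset.erase_subset_erase e h)
  · exact .inr (.inl (Finset.erase_subset_erase e h))
  · exact .inr (.inr (h.mono (Finset.erase_subset e E) (Finset.erase_subset e E')))

theorem IsLaminar.subset_of_not_disjoint (hF : IsLaminar F) (hE₀ : E₀ ∈ F)
    (hmin : ∀ E ∈ F, E₀.card ≤ E.card) (hE : E ∈ F) (hmeet : ¬Disjoint E E₀) : E₀ ⊆ E := by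
  rcases hF E hE E₀ hE₀ with h | h | h
  · exact (Finset.eq_of_subset_of_card_le h (hmin E hE)).ge
  · exact h
  · exact absurd h hmeet

theorem IsLaminar.injOn_erase_of_min [DecidableEq β] (hF : IsLaminar F) (hE₀ : E₀ ∈ F)
    (hmin : ∀ E ∈ F, E₀.card ≤ E.card) {e f : β} (he : e ∈ E₀) (hf : f ∈ E₀) (hef : e ≠ f) :
    Set.InjOn (·.erase e) (F : Set (Finset β)) := by
  have hsup : ∀ E ∈ F, ∀ y ∈ E₀, y ∈ E → E₀ ⊆ E := fun E hE y hy hyE =>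
    hF.subset_of_not_disjoint hE₀ hmin hE (Finset.not_disjoint_iff.mpr ⟨y, hyE, hy⟩)
  have hef_mem : ∀ E ∈ F, e ∈ E ↔ f ∈ E := fun E hE =>
    ⟨fun h => hsup E hE e he h hf, fun h => hsup E hE f hf h he⟩
  intro E₁ h₁ E₂ h₂ h
  have hf₁₂ : f ∈ E₁ ↔ f ∈ E₂ := by
    simpa [Finset.mem_erase, Ne.symm hef] using congrArg (f ∈ ·) h
  have he₁₂ : e ∈ E₁ ↔ e ∈ E₂ := (hef_mem E₁ h₁).trans (hf₁₂.trans (hef_mem E₂ h₂).symm)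
  dsimp only at h
  by_cases he₁ : e ∈ E₁
  · rw [← Finset.insert_erase he₁, ← Finset.insert_erase (he₁₂.mp he₁), h]
  · rwa [Finset.erase_eq_of_notMem he₁, Finset.erase_eq_of_notMem (he₁₂.not.mp he₁)] at h

theorem IsLaminar.card_le_card_sub_one [DecidableEq β] (hF : IsLaminar F) (hU : ∀ E ∈ F, E ⊆ U)
    (htwo : ∀ E ∈ F, 2 ≤ E.card) : F.card ≤ U.card - 1 := by
  obtain ⟨k, hk⟩ : ∃ k, F.card = k := ⟨_, rfl⟩
  induction k generalizing U F with
  | zero => simp [hk]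
  | succ k ih =>
    -- Erase a point `e` of a smallest member `E₀`: every member containing `e` contains `E₀`, so
    -- erasing `e` is injective on `F`, and only `E₀` drops below two elements.
    obtain ⟨E₀, hE₀, hmin⟩ := F.exists_min_image Finset.card (Finset.card_pos.mp (by omega))
    obtain ⟨e, he, f, hf, hef⟩ := Finset.one_lt_card.mp (htwo E₀ hE₀)
    set F' := (F.erase E₀).image (·.erase e)
    have hcard : F'.card = k := by
      rw [Finset.card_image_of_injOn ((hF.injOn_erase_of_min hE₀ hmin he hf hef).mono
        (Finset.coe_subset.mpr (Finset.erase_subset E₀ F))), Finset.card_erase_of_mem hE₀, hk]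
      rfl
    have hU' : ∀ E ∈ F', E ⊆ U.erase e := by
      intro _ hA
      obtain ⟨E, hE, rfl⟩ := Finset.mem_image.mp hA
      exact Finset.erase_subset_erase e (hU E (Finset.mem_of_mem_erase hE))
    have htwo' : ∀ E ∈ F', 2 ≤ E.card := by
      intro _ hA
      obtain ⟨E, hE, rfl⟩ := Finset.mem_image.mp hA
      obtain ⟨hEE₀, hEF⟩ := Finset.mem_erase.mp hE
      by_cases heE : e ∈ E
      · have hE₀E := hF.subset_of_not_disjoint hE₀ hmin hEF
          (Finset.not_disjoint_iff.mpr ⟨e, heE, he⟩)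
        have := Finset.card_lt_card (Finset.ssubset_iff_subset_ne.mpr ⟨hE₀E, Ne.symm hEE₀⟩)
        have := htwo E₀ hE₀
        rw [Finset.card_erase_of_mem heE]
        omega
      · rw [Finset.erase_eq_of_notMem heE]
        exact htwo E hEF
    have hF' : F'.card ≤ (U.erase e).card - 1 :=
      ih ((hF.mono (Finset.erase_subset E₀ F)).image_erase e) hU' htwo' hcard
    have hU₂ := (htwo E₀ hE₀).trans (Finset.card_le_card (hU E₀ hE₀))
    rw [Finset.card_erase_of_mem (hU E₀ hE₀ he)] at hF'
    omega

end Laminar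

theorem sum_card_sub_one_le_card_filter_eq_empty {ι κ : Type*} [DecidableEq κ] {s : Finset ι}
    {t : ι → Finset κ} (f : (Σ _ : ι, κ) → ι) (hmaps : Set.MapsTo f (s.sigma t) s)
    (hinj : Set.InjOn f (s.sigma t)) :
    ∑ i ∈ s, ((t i).card - 1) ≤ (s.filter (fun i => t i = ∅)).card := by
  have hsum : ∑ i ∈ s, (t i).card ≤ s.card := by
    rw [← Finset.card_sigma]
    exact Finset.card_le_card_of_injOn f hmaps hinj
  have hpoint : ∑ i ∈ s, ((t i).card - 1) + s.card
      ≤ ∑ i ∈ s, (t i).card + (s.filter (fun i => t i = ∅)).card := by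
    rw [Finset.card_eq_sum_ones, Finset.card_filter, ← Finset.sum_add_distrib,
      ← Finset.sum_add_distrib]
    refine Finset.sum_le_sum fun i _ => ?_
    split_ifs with h
    · simp [h]
    · have := Finset.nonempty_iff_ne_empty.mpr h |>.card_pos
      omega
  omega

section Factors

variable {α : Type*} [DecidableEq α] {x v : List α} {a b : α}

def factors (x : List α) : Finset (List α) :=
  (x.tails.flatMap List.inits).toFinset.filter (· ≠ [])

theorem mem_factors : v ∈ factors x ↔ v ≠ [] ∧ 0 < occ x v := by
  simp [factors, List.mem_flatMap, List.mem_tails, List.mem_inits, occ_pos_iff,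
    List.infix_iff_prefix_suffix, and_comm]

theorem card_le_length_of_forall_suffix {S : Finset (List α)} (hS : ∀ v ∈ S, v ≠ [] ∧ v <:+ x) :
    S.card ≤ x.length :=
  calc S.card ≤ (x.tails.toFinset.erase []).card :=
        Finset.card_le_card fun v hv => by simp [List.mem_tails, hS v hv]
    _ = x.tails.toFinset.card - 1 := Finset.card_erase_of_mem (by simp)
    _ ≤ x.tails.length - 1 := Nat.sub_le_sub_right (List.toFinset_card_le _) 1
    _ = x.length := by simp

theorem card_le_length_of_forall_prefix {S : Finset (List α)} (hS : ∀ v ∈ S, v ≠ [] ∧ v <+: x) :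
    S.card ≤ x.length :=
  calc S.card ≤ (x.inits.toFinset.erase []).card :=
        Finset.card_le_card fun v hv => by simp [List.mem_inits, hS v hv]
    _ = x.inits.toFinset.card - 1 := Finset.card_erase_of_mem (by simp)
    _ ≤ x.inits.length - 1 := Nat.sub_le_sub_right (List.toFinset_card_le _) 1
    _ = x.length := by simp

theorem occurrences_subset_range (hv : v ≠ []) : occurrences x v ⊆ Finset.range x.length := by
  intro i hi
  obtain ⟨-, hpre⟩ := mem_occurrences.mp hi
  have := hpre.length_le
  have := List.length_pos_iff.mpr hv
  simp only [List.length_drop] at *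
  simp only [Finset.mem_range]
  omega

theorem isLaminar_image_occurrences (S : Finset (List α)) :
    IsLaminar (S.image (occurrences x)) := by
  intro _ hA _ hB
  obtain ⟨v, -, rfl⟩ := Finset.mem_image.mp hA
  obtain ⟨w, -, rfl⟩ := Finset.mem_image.mp hB
  rcases Finset.disjoint_or_nonempty_inter (occurrences x v) (occurrences x w) with h | ⟨i, hi⟩
  · exact .inr (.inr h)
  obtain ⟨hv, hw⟩ := Finset.mem_inter.mp hi
  rcases le_total v.length w.length with h | h
  · exact .inr (.inl (occurrences_subset_of_prefix (prefix_of_mem_occurrences hv hw h)))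
  · exact .inl (occurrences_subset_of_prefix (prefix_of_mem_occurrences hw hv h))

variable [Fintype α]

def leftExt (x v : List α) : Finset α := Finset.univ.filter fun a => 0 < occ x (a :: v)

def rightExt (x v : List α) : Finset α := Finset.univ.filter fun b => 0 < occ x (v ++ [b])

def strictLeftExt (x v : List α) : Finset α :=
  (leftExt x v).filter fun a => occ x (a :: v) < occ x v

def strictRightExt (x v : List α) : Finset α :=
  (rightExt x v).filter fun b => occ x (v ++ [b]) < occ x v

theorem mem_strictLeftExt :
    a ∈ strictLeftExt x v ↔ 0 < occ x (a :: v) ∧ occ x (a :: v) < occ x v := by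
  simp [strictLeftExt, leftExt]

theorem mem_strictRightExt :
    b ∈ strictRightExt x v ↔ 0 < occ x (v ++ [b]) ∧ occ x (v ++ [b]) < occ x v := by
  simp [strictRightExt, rightExt]

theorem prefix_of_leftExt_eq_empty (hv : 0 < occ x v) (h : leftExt x v = ∅) : v <+: x := by
  obtain ⟨p, s, hx⟩ := occ_pos_iff.mp hv
  rcases List.eq_nil_or_concat' p with rfl | ⟨p, a, rfl⟩
  · exact ⟨s, hx⟩
  · have : a ∈ leftExt x v := by
      simpa [leftExt, occ_pos_iff] using ⟨p, s, by simpa using hx⟩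
    simp [h] at this

theorem suffix_of_rightExt_eq_empty (hv : 0 < occ x v) (h : rightExt x v = ∅) : v <:+ x := by
  obtain ⟨p, s, hx⟩ := occ_pos_iff.mp hv
  rcases s with _ | ⟨b, s⟩
  · exact ⟨p, by simpa using hx⟩
  · have : b ∈ rightExt x v := by
      simpa [rightExt, occ_pos_iff] using ⟨p, s, by simpa using hx⟩
    simp [h] at this

theorem sum_card_leftExt_sub_one_le :
    ∑ v ∈ factors x, ((leftExt x v).card - 1) ≤ x.length := by
  refine (sum_card_sub_one_le_card_filter_eq_empty (fun p => p.2 :: p.1) ?_ ?_).trans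
    (card_le_length_of_forall_prefix fun v hv => ?_)
  · rintro ⟨v, a⟩ hp
    simp only [Finset.coe_sigma, Set.mem_sigma_iff, Finset.mem_coe, leftExt,
      Finset.mem_filter, Finset.mem_univ, true_and] at hp
    exact mem_factors.mpr ⟨List.cons_ne_nil _ _, hp.2⟩
  · rintro ⟨v, a⟩ - ⟨v', a'⟩ - h
    obtain ⟨rfl, rfl⟩ := List.cons.inj h
    rfl
  · obtain ⟨hv, hL⟩ := Finset.mem_filter.mp hv
    exact ⟨(mem_factors.mp hv).1, prefix_of_leftExt_eq_empty (mem_factors.mp hv).2 hL⟩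

theorem sum_card_rightExt_sub_one_le :
    ∑ v ∈ factors x, ((rightExt x v).card - 1) ≤ x.length := by
  refine (sum_card_sub_one_le_card_filter_eq_empty (fun p => p.1 ++ [p.2]) ?_ ?_).trans
    (card_le_length_of_forall_suffix fun v hv => ?_)
  · rintro ⟨v, b⟩ hp
    simp only [Finset.coe_sigma, Set.mem_sigma_iff, Finset.mem_coe, rightExt,
      Finset.mem_filter, Finset.mem_univ, true_and] at hp
    exact mem_factors.mpr ⟨by simp, hp.2⟩
  · rintro ⟨v, b⟩ - ⟨v', b'⟩ - h
    obtain ⟨rfl, h⟩ := List.append_inj' h rfl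
    obtain rfl := List.singleton_inj.mp h
    rfl
  · obtain ⟨hv, hR⟩ := Finset.mem_filter.mp hv
    exact ⟨(mem_factors.mp hv).1, suffix_of_rightExt_eq_empty (mem_factors.mp hv).2 hR⟩

end Factors

section Candidates

variable {α : Type*} [DecidableEq α] [Fintype α] {x v w : List α} {a b : α}

theorem strictRightExt_eq_empty_of_occ_eq (hvw : v <+: w) (hlt : v.length < w.length)
    (hocc : occ x w = occ x v) : strictRightExt x v = ∅ := by
  obtain ⟨t, rfl⟩ := hvw
  obtain ⟨c, t, rfl⟩ := List.exists_cons_of_length_pos (by simpa using hlt)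
  have hc : occ x (v ++ [c]) = occ x v :=
    le_antisymm (occ_le_of_prefix (List.prefix_append _ _))
      (hocc ▸ occ_le_of_prefix ⟨t, by simp⟩)
  refine Finset.eq_empty_of_forall_notMem fun b hb => ?_
  obtain ⟨hpos, hlt⟩ := mem_strictRightExt.mp hb
  rcases eq_or_ne b c with rfl | hbc
  · omega
  · have := occ_concat_add_occ_concat_le (x := x) (v := v) hbc
    omega

theorem eq_of_occurrences_eq_of_length_le (hv : 0 < occ x v) (hR : (strictRightExt x v).Nonempty)
    (hocc : occurrences x v = occurrences x w) (hlen : v.length ≤ w.length) : v = w := by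
  obtain ⟨i, hi⟩ := Finset.card_pos.mp hv
  have hvw := prefix_of_mem_occurrences hi (hocc ▸ hi) hlen
  refine hvw.eq_of_length (hlen.antisymm (not_lt.mp fun hlt => ?_))
  rw [strictRightExt_eq_empty_of_occ_eq hvw hlt (by rw [← card_occurrences, ← hocc]; rfl)] at hR
  exact Finset.not_nonempty_empty hR

def factorsWithStrictExt (x : List α) : Finset (List α) :=
  (factors x).filter fun v => (strictLeftExt x v).Nonempty ∧ (strictRightExt x v).Nonempty

theorem card_factorsWithStrictExt_le : (factorsWithStrictExt x).card ≤ x.length := by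
  have hinj : Set.InjOn (occurrences x) (factorsWithStrictExt x) := by
    intro v hv w hw h
    simp only [factorsWithStrictExt, Finset.mem_coe, Finset.mem_filter, mem_factors] at hv hw
    rcases le_total v.length w.length with hlen | hlen
    · exact eq_of_occurrences_eq_of_length_le hv.1.2 hv.2.2 h hlen
    · exact (eq_of_occurrences_eq_of_length_le hw.1.2 hw.2.2 h.symm hlen).symm
  rw [← Finset.card_image_of_injOn hinj]
  refine ((isLaminar_image_occurrences _).card_le_card_sub_one (U := Finset.range x.length)
    ?_ ?_).trans (by simp)
  · intro _ hA
    obtain ⟨v, hv, rfl⟩ := Finset.mem_image.mp hA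
    exact occurrences_subset_range (mem_factors.mp (Finset.mem_filter.mp hv).1).1
  · intro _ hA
    obtain ⟨v, hv, rfl⟩ := Finset.mem_image.mp hA
    obtain ⟨a, ha⟩ := (Finset.mem_filter.mp hv).2.1
    have := mem_strictLeftExt.mp ha
    rw [card_occurrences]
    omega

def candidates (x : List α) : Finset (List α) :=
  ((factors x).sigma fun v => strictLeftExt x v ×ˢ strictRightExt x v).image
    fun p => p.2.1 :: (p.1 ++ [p.2.2])

theorem card_strictLeftExt_mul_card_strictRightExt_le (hv : v ∈ factorsWithStrictExt x) :
    (strictLeftExt x v).card * (strictRightExt x v).card ≤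
      Fintype.card α * ((rightExt x v).card - 1) + ((leftExt x v).card - 1) + 1 := by
  obtain ⟨-, hL, hR⟩ := Finset.mem_filter.mp hv
  have hLL : (strictLeftExt x v).card ≤ (leftExt x v).card :=
    Finset.card_le_card (Finset.filter_subset _ _)
  have hRR : (strictRightExt x v).card ≤ (rightExt x v).card :=
    Finset.card_le_card (Finset.filter_subset _ _)
  have hmul := Nat.mul_le_mul (Finset.card_le_univ (strictLeftExt x v))
    (Nat.sub_le_sub_right hRR 1)
  rw [Nat.mul_sub_one] at hmul
  have := hL.card_pos
  have := Nat.le_mul_of_pos_right (strictLeftExt x v).card hR.card_pos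
  omega

theorem card_candidates_le :
    (candidates x).card ≤ Fintype.card α * x.length + 2 * x.length := by
  set B := factorsWithStrictExt x
  calc (candidates x).card
      ≤ ∑ v ∈ factors x, (strictLeftExt x v).card * (strictRightExt x v).card := by
        rw [candidates]
        refine Finset.card_image_le.trans_eq ?_
        simp only [Finset.card_sigma, Finset.card_product]
    _ = ∑ v ∈ B, (strictLeftExt x v).card * (strictRightExt x v).card := by
        refine (Finset.sum_filter_of_ne fun v _ h => ?_).symm
        simp only [← Finset.card_pos]
        exact ⟨Nat.pos_of_mul_pos_right (Nat.pos_of_ne_zero h),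
          Nat.pos_of_mul_pos_left (Nat.pos_of_ne_zero h)⟩
    _ ≤ ∑ v ∈ B, (Fintype.card α * ((rightExt x v).card - 1) + ((leftExt x v).card - 1) + 1) :=
        Finset.sum_le_sum fun _ => card_strictLeftExt_mul_card_strictRightExt_le
    _ = Fintype.card α * ∑ v ∈ B, ((rightExt x v).card - 1) +
          ∑ v ∈ B, ((leftExt x v).card - 1) + B.card := by
        rw [Finset.sum_add_distrib, Finset.sum_add_distrib, Finset.mul_sum, Finset.card_eq_sum_ones]
    _ ≤ Fintype.card α * x.length + x.length + x.length := by
        gcongr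
        · exact (Finset.sum_le_sum_of_subset (Finset.filter_subset _ _)).trans
            sum_card_rightExt_sub_one_le
        · exact (Finset.sum_le_sum_of_subset (Finset.filter_subset _ _)).trans
            sum_card_leftExt_sub_one_le
        · exact card_factorsWithStrictExt_le
    _ = Fintype.card α * x.length + 2 * x.length := by ring

end Candidates

theorem exists_eq_cons_append_singleton {α : Type*} {w : List α} (h : 2 < w.length) :
    ∃ a v b, v ≠ [] ∧ w = a :: (v ++ [b]) := by
  obtain ⟨a, t, rfl⟩ := List.exists_cons_of_length_pos (by omega : 0 < w.length)
  obtain ⟨v, b, rfl⟩ := (List.eq_nil_or_concat' t).resolve_left (by rintro rfl; simp at h)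
  exact ⟨a, v, b, by rintro rfl; simp at h, rfl⟩

section Avoided

variable {α : Type*} [DecidableEq α] {x v w : List α} {a b : α}

theorem expFreq_cons_append_singleton :
    expFreq x (a :: (v ++ [b])) = if 0 < occ x v then
      (occ x (a :: v) * occ x (v ++ [b]) : ℝ) / occ x v else 0 := by
  rw [expFreq, List.tail_cons, List.dropLast_concat, ← List.cons_append, List.dropLast_concat]

theorem occ_lt_expFreq_of_stdDev_neg (h : stdDev x w < 0) : (occ x w : ℝ) < expFreq x w := by
  have hden : 0 < max (Real.sqrt (expFreq x w)) 1 := lt_max_of_lt_right one_pos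
  rw [stdDev, div_neg_iff] at h
  rcases h with ⟨-, h⟩ | ⟨h, -⟩
  · exact absurd h hden.not_gt
  · linarith

theorem occ_pos_and_mul_lt_of_stdDev_neg (h : stdDev x (a :: (v ++ [b])) < 0) :
    0 < occ x v ∧ occ x (a :: (v ++ [b])) * occ x v < occ x (a :: v) * occ x (v ++ [b]) := by
  have hlt := occ_lt_expFreq_of_stdDev_neg h
  rw [expFreq_cons_append_singleton] at hlt
  split_ifs at hlt with hv
  · refine ⟨hv, ?_⟩
    exact_mod_cast (lt_div_iff₀ (by exact_mod_cast hv)).mp hlt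
  · exact absurd hlt (by simp)

variable [Fintype α]

theorem mem_candidates_of_stdDev_neg (hv : v ≠ []) (h : stdDev x (a :: (v ++ [b])) < 0) :
    a :: (v ++ [b]) ∈ candidates x := by
  obtain ⟨hocc, hmul⟩ := occ_pos_and_mul_lt_of_stdDev_neg h
  have hav : occ x (a :: v) ≤ occ x v := occ_cons_le
  have hvb : occ x (v ++ [b]) ≤ occ x v := occ_le_of_prefix (List.prefix_append _ _)
  have hie : occ x (a :: v) + occ x (v ++ [b]) ≤ occ x v + occ x (a :: (v ++ [b])) :=
    occ_cons_add_occ_concat_le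
  refine Finset.mem_image.mpr ⟨⟨v, a, b⟩, Finset.mem_sigma.mpr ⟨mem_factors.mpr ⟨hv, hocc⟩,
    Finset.mem_product.mpr ⟨mem_strictLeftExt.mpr ⟨?_, ?_⟩, mem_strictRightExt.mpr ⟨?_, ?_⟩⟩⟩,
    rfl⟩ <;> nlinarith

end Avoided

/-- Let `ρ < 0`. The total number of `ρ`-avoided words `w` in `x` with
`|w| > 2` (of any length, occurring or absent) is at most `σ·n + 2n`. -/
theorem stmt_17 {α : Type*} [DecidableEq α] [Fintype α] (σ : ℕ)
    (hσ : Fintype.card α = σ) (ρ : ℝ) (hρ : ρ < 0) (x : List α) :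
    {w : List α | 2 < w.length ∧ stdDev x w ≤ ρ}.Finite ∧
    {w : List α | 2 < w.length ∧ stdDev x w ≤ ρ}.ncard ≤
      σ * x.length + 2 * x.length := by
  have hsub : {w : List α | 2 < w.length ∧ stdDev x w ≤ ρ} ⊆ candidates x := by
    rintro w ⟨hlen, hstd⟩
    obtain ⟨a, v, b, hv, rfl⟩ := exists_eq_cons_append_singleton hlen
    exact mem_candidates_of_stdDev_neg hv (hstd.trans_lt hρ)
  refine ⟨(candidates x).finite_toSet.subset hsub, ?_⟩
  calc _ ≤ (candidates x : Set (List α)).ncard :=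
        Set.ncard_le_ncard hsub (candidates x).finite_toSet
    _ = (candidates x).card := Set.ncard_coe_finset _
    _ ≤ σ * x.length + 2 * x.length := hσ ▸ card_candidates_le
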